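/- For every b>0 and every integer p ≥ 1, P( sup_{s≤t} X_s > b ) ≤ exp{ (b / ((1+1/p)·a)) · ( 1 + log( t·B(a)·(p!)^{1/p} / (a·b) ) ) }. -/

import Mathlib

open MeasureTheory Filter Set Topology

noncomputable section

/-- Upper tail of the Lévy measure: `Λ̄₊(x) = Λ((x,∞))`. -/
def upperTail (Λ : Measure ℝ) (x : ℝ) : ℝ := (Λ (Set.Ioi x)).toReal

/-- Lower tail of the Lévy measure: `Λ̄₋(x) = Λ((−∞,−x))`. -/
def lowerTail (Λ : Measure ℝ) (x : ℝ) : ℝ := (Λ (Set.Iio (-x))).toReal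

/-- `φ(u) = sup {x > 0 : Λ̄₊(x) > u}` for a general tail function `G`. -/
def phiOf (G : ℝ → ℝ) (u : ℝ) : ℝ := sSup {x : ℝ | 0 < x ∧ G x > u}

/-- The norming function `a(t) = φ(1/t)` built from a tail function `G`. -/
def normOf (G : ℝ → ℝ) (t : ℝ) : ℝ := phiOf G (1 / t)

/-- The norming function `a(t)` of a Lévy measure. -/
def normFn (Λ : Measure ℝ) (t : ℝ) : ℝ := normOf (upperTail Λ) t

/-- `γ₊ = ∫_{(0,1]} y Λ(dy)` when finite, `0` otherwise. -/
def gammaPlus (Λ : Measure ℝ) : ℝ :=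
  if (∫⁻ y in Set.Ioc (0:ℝ) 1, ENNReal.ofReal y ∂Λ) < ⊤ then
    ∫ y in Set.Ioc (0:ℝ) 1, y ∂Λ
  else 0

/-- `γ₋ = ∫_{[−1,0)} y Λ(dy)` when `∫_{[−1,0)} |y| Λ(dy) < ∞`, `0` otherwise. -/
def gammaMinus (Λ : Measure ℝ) : ℝ :=
  if (∫⁻ y in Set.Ico (-1:ℝ) 0, ENNReal.ofReal (-y) ∂Λ) < ⊤ then
    ∫ y in Set.Ico (-1:ℝ) 0, y ∂Λ
  else 0

/-- `ℓ` is slowly varying at `0`: `ℓ(λ t)/ℓ(t) → 1` as `t ↓ 0`, for every `λ > 0`. -/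
def SlowlyVaryingAtZero (ℓ : ℝ → ℝ) : Prop :=
  ∀ lam : ℝ, 0 < lam →
    Tendsto (fun t => ℓ (lam * t) / ℓ t) (𝓝[>] (0:ℝ)) (𝓝 1)

/-- `ℓ` is super-slowly varying at `0` with auxiliary function `ξ(t) = (−log t)⁻¹`:
for some `Δ > 0`, `ℓ(t ξ(t)^δ)/ℓ(t) → 1` as `t ↓ 0`, uniformly in `δ ∈ [0,Δ]`. -/
def SuperSlowlyVaryingAtZero (ℓ : ℝ → ℝ) : Prop :=
  ∃ Δ : ℝ, 0 < Δ ∧ ∀ ε : ℝ, 0 < ε → ∃ t₀ : ℝ, 0 < t₀ ∧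
    ∀ t : ℝ, 0 < t → t < t₀ → ∀ δ : ℝ, 0 ≤ δ → δ ≤ Δ →
      |ℓ (t * ((-Real.log t)⁻¹) ^ δ) / ℓ t - 1| < ε

/-- A real-valued Lévy process without Gaussian component, with drift `γ` and
Lévy measure `Λ`: càdlàg paths starting at `0`, stationary independent increments,
and the Lévy–Khintchine characteristic function. -/
structure IsLevyNoGauss {Ω : Type*} [MeasurableSpace Ω] (P : Measure Ω)
    (X : ℝ → Ω → ℝ) (γ : ℝ) (Λ : Measure ℝ) : Prop where
  meas : ∀ t : ℝ, Measurable (X t)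
  init : ∀ᵐ ω ∂P, X 0 ω = 0
  right_cont : ∀ᵐ ω ∂P, ∀ t : ℝ, 0 ≤ t →
    Tendsto (fun s => X s ω) (𝓝[≥] t) (𝓝 (X t ω))
  left_lim : ∀ᵐ ω ∂P, ∀ t : ℝ, 0 < t →
    ∃ l : ℝ, Tendsto (fun s => X s ω) (𝓝[<] t) (𝓝 l)
  stationary : ∀ s t : ℝ, 0 ≤ s → 0 ≤ t →
    Measure.map (fun ω => X (s + t) ω - X s ω) P = Measure.map (X t) P
  indep : ∀ (n : ℕ) (τ : Fin (n + 1) → ℝ), (∀ i, 0 ≤ τ i) → Monotone τ →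
    ProbabilityTheory.iIndepFun
      (fun i : Fin n => fun ω => X (τ i.succ) ω - X (τ i.castSucc) ω) P
  levy_integrability : (∫⁻ y, ENNReal.ofReal (min 1 (y ^ 2)) ∂Λ) < ⊤
  no_atom_zero : Λ {0} = 0
  char_fun : ∀ (u t : ℝ), 0 ≤ t →
    ∫ ω, Complex.exp (Complex.I * u * X t ω) ∂P =
      Complex.exp (t * (Complex.I * γ * u +
        ∫ y : ℝ, (Complex.exp (Complex.I * u * y) - 1 -
          Complex.I * u * Set.indicator {y : ℝ | |y| ≤ 1} (fun y => (y : ℂ)) y) ∂Λ))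

variable {Ω : Type*} [MeasurableSpace Ω]

/-- Running supremum `X̄_t = sup_{0 ≤ s ≤ t} X_s`. -/
def runSup (X : ℝ → Ω → ℝ) (t : ℝ) (ω : Ω) : ℝ :=
  sSup ((fun s => X s ω) '' Set.Icc 0 t)

/-- The jump `ΔX_s = X_s − X_{s−}`. -/
def jump (X : ℝ → Ω → ℝ) (s : ℝ) (ω : Ω) : ℝ :=
  X s ω - Function.leftLim (fun u => X u ω) s

/-- Maximal jump `m_t = sup_{0 < s ≤ t} ΔX_s`. -/
def maxJump (X : ℝ → Ω → ℝ) (t : ℝ) (ω : Ω) : ℝ :=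
  sSup ((fun s => jump X s ω) '' Set.Ioc 0 t)

/-- `M_t = sup_{t ≤ s ≤ 1} m_s / a(s)`. -/
def Mproc (Λ : Measure ℝ) (X : ℝ → Ω → ℝ) (t : ℝ) (ω : Ω) : ℝ :=
  sSup ((fun s => maxJump X s ω / normFn Λ s) '' Set.Icc t 1)

/-- `Y_t = sup_{t ≤ s ≤ 1} X̄_s / a(s)`. -/
def Yproc (Λ : Measure ℝ) (X : ℝ → Ω → ℝ) (t : ℝ) (ω : Ω) : ℝ :=
  sSup ((fun s => runSup X s ω / normFn Λ s) '' Set.Icc t 1)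

/-- The `α = 1` centering function. -/
def centering (Λ : Measure ℝ) (t : ℝ) : ℝ :=
  if (∫⁻ y in Set.Ioc (0:ℝ) 1, ENNReal.ofReal y ∂Λ) < ⊤ then
    t * ∫ y in Set.Ioc (0:ℝ) (normFn Λ t), y ∂Λ
  else
    -(t * ∫ y in Set.Ioc (normFn Λ t) 1, y ∂Λ)

end

open scoped ENNReal NNReal

set_option maxHeartbeats 2000000

lemma exp_tail_eq' (x : ℝ) :
    Real.exp x - 1 - x = ∑' n : ℕ, x ^ (n + 2) / (Nat.factorial (n + 2)) := by
  have hs : Summable (fun n : ℕ => x ^ n / (Nat.factorial n)) :=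
    Real.summable_pow_div_factorial x
  have hs1 : Summable (fun n : ℕ => x ^ (n + 1) / (Nat.factorial (n + 1))) :=
    (summable_nat_add_iff 1).2 hs
  have hexp : Real.exp x = ∑' n : ℕ, x ^ n / (Nat.factorial n) := by
    rw [Real.exp_eq_exp_ℝ, NormedSpace.exp_eq_tsum_div]
  rw [hexp, Summable.tsum_eq_zero_add hs, Summable.tsum_eq_zero_add hs1]
  norm_num

set_option maxHeartbeats 1000000 in
lemma exp_tail_mul_le' {x z : ℝ} (hx : 0 ≤ x) (hxz : x ≤ z) :
    (Real.exp x - 1 - x) * z ^ 2 ≤ (Real.exp z - 1 - z) * x ^ 2 := by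
  have hz : 0 ≤ z := hx.trans hxz
  have hsx : Summable (fun n : ℕ => x ^ (n + 2) / (Nat.factorial (n + 2))) :=
    (summable_nat_add_iff 2).2 (Real.summable_pow_div_factorial x)
  have hsz : Summable (fun n : ℕ => z ^ (n + 2) / (Nat.factorial (n + 2))) :=
    (summable_nat_add_iff 2).2 (Real.summable_pow_div_factorial z)
  rw [exp_tail_eq', exp_tail_eq', ← tsum_mul_right, ← tsum_mul_right]
  refine Summable.tsum_le_tsum (fun n => ?_) (hsx.mul_right _) (hsz.mul_right _)
  rw [div_mul_eq_mul_div, div_mul_eq_mul_div]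
  have key : x ^ (n + 2) * z ^ 2 ≤ z ^ (n + 2) * x ^ 2 := by
    have h1 : x ^ n ≤ z ^ n := pow_le_pow_left₀ hx hxz n
    calc x ^ (n+2) * z ^ 2 = x ^ n * (x ^ 2 * z ^ 2) := by ring
    _ ≤ z ^ n * (x ^ 2 * z ^ 2) := mul_le_mul_of_nonneg_right h1 (by positivity)
    _ = z ^ (n+2) * x ^ 2 := by ring
  gcongr

lemma exp_sub_one_sub_le' {x : ℝ} (hx : 0 ≤ x) :
    Real.exp x - 1 - x ≤ x * Real.exp x := by
  have h1 : Real.exp (-x) * Real.exp x = 1 := by rw [← Real.exp_add]; simp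
  nlinarith [Real.add_one_le_exp (-x), Real.exp_pos x]

lemma succ_pow_le_exp_mul_factorial' (p : ℕ) :
    ((p : ℝ) + 1) ^ p ≤ Real.exp p * (Nat.factorial p) := by
  have h1 : ((p : ℝ) + 1) ^ p = ∑ k ∈ Finset.range (p + 1), (p : ℝ) ^ k * (p.choose k) := by
    rw [add_pow]; simp
  have h2 : ∀ k ∈ Finset.range (p + 1),
      (p : ℝ) ^ k * (p.choose k) ≤ (Nat.factorial p) * ((p : ℝ) ^ k / (Nat.factorial k)) := by
    intro k hk
    have hk' : k ≤ p := Nat.lt_succ_iff.mp (Finset.mem_range.mp hk)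
    have hc : (p.choose k) * (Nat.factorial k) ≤ Nat.factorial p := by
      have := Nat.choose_mul_factorial_mul_factorial hk'
      calc p.choose k * Nat.factorial k
          ≤ p.choose k * Nat.factorial k * Nat.factorial (p - k) :=
            Nat.le_mul_of_pos_right _ (Nat.factorial_pos _)
        _ = Nat.factorial p := this
    have hcR : (p.choose k : ℝ) ≤ (Nat.factorial p : ℝ) / (Nat.factorial k : ℝ) := by
      rw [le_div_iff₀ (by exact_mod_cast Nat.factorial_pos k)]
      exact_mod_cast hc
    have hp : (0:ℝ) ≤ (p:ℝ) ^ k := by positivity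
    calc (p : ℝ) ^ k * (p.choose k) ≤ (p : ℝ) ^ k * ((Nat.factorial p : ℝ) / (Nat.factorial k)) :=
          mul_le_mul_of_nonneg_left hcR hp
      _ = (Nat.factorial p) * ((p : ℝ) ^ k / (Nat.factorial k)) := by ring
  calc ((p : ℝ) + 1) ^ p = ∑ k ∈ Finset.range (p + 1), (p : ℝ) ^ k * (p.choose k) := h1
    _ ≤ ∑ k ∈ Finset.range (p + 1), (Nat.factorial p : ℝ) * ((p : ℝ) ^ k / (Nat.factorial k)) :=
        Finset.sum_le_sum h2
    _ = (Nat.factorial p : ℝ) * ∑ k ∈ Finset.range (p + 1), ((p : ℝ) ^ k / (Nat.factorial k)) := by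
        rw [Finset.mul_sum]
    _ ≤ (Nat.factorial p : ℝ) * Real.exp p := by
        have := Real.sum_le_exp_of_nonneg (x := (p:ℝ)) (by positivity) (p + 1)
        exact mul_le_mul_of_nonneg_left this (by positivity)
    _ = Real.exp p * (Nat.factorial p) := by ring


/-- **Proposition, inequality (4.1).** For a martingale with the exponential moments of the
small-jump part of a Lévy process, for every `b > 0` and integer `p ≥ 1`,
`P(sup_{s≤t} X_s > b) ≤ exp{ (b/((1+1/p)a)) (1 + log( t B(a) (p!)^{1/p} / (ab) )) }`. -/
theorem martingale_exp_upper_tail_inequality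
    {Ω : Type*} {mΩ : MeasurableSpace Ω} (P : Measure Ω) [IsProbabilityMeasure P]
    (ℱ : Filtration ℝ mΩ) (X : ℝ → Ω → ℝ) (Λ : Measure ℝ) (a t : ℝ)
    (hΛ0 : Λ (Set.Iic 0) = 0)
    (ha : 0 < a) (ht : 0 < t)
    (hBpos : 0 < ∫ y in Set.Ioc (0:ℝ) a, y ^ 2 ∂Λ)
    (hBfin : (∫⁻ y in Set.Ioc (0:ℝ) a, ENNReal.ofReal (y ^ 2) ∂Λ) < ⊤)
    (hmart : Martingale X ℱ P)
    (hrc : ∀ᵐ ω ∂P, ∀ s : ℝ, Tendsto (fun u => X u ω) (𝓝[≥] s) (𝓝 (X s ω)))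
    (h0 : ∀ᵐ ω ∂P, X 0 ω = 0)
    (hmgf : ∀ θ : ℝ, ∀ s : ℝ, 0 ≤ s → s ≤ t →
      ∫ ω, Real.exp (θ * X s ω) ∂P =
        Real.exp (s * ∫ y in Set.Ioc (0:ℝ) a, (Real.exp (θ * y) - 1 - θ * y) ∂Λ)) :
    ∀ b : ℝ, 0 < b → ∀ p : ℕ, 1 ≤ p →
      (P {ω | b < sSup ((fun s => X s ω) '' Set.Icc 0 t)}).toReal ≤
        Real.exp (b / ((1 + 1 / (p : ℝ)) * a) *
          (1 + Real.log (t * (∫ y in Set.Ioc (0:ℝ) a, y ^ 2 ∂Λ) *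
            (p.factorial : ℝ) ^ ((p : ℝ)⁻¹) / (a * b)))) := by
  intro b hb p hp
  classical
  set B : ℝ := ∫ y in Set.Ioc (0:ℝ) a, y ^ 2 ∂Λ with hBdef
  set cp : ℝ := (p.factorial : ℝ) ^ ((p : ℝ)⁻¹) with hcp
  -- integrability of exponential moments
  have hint : ∀ θ : ℝ, ∀ s : ℝ, 0 ≤ s → s ≤ t →
      Integrable (fun ω => Real.exp (θ * X s ω)) P := by
    intro θ s hs hst
    by_contra h
    have h2 := hmgf θ s hs hst
    rw [integral_undef h] at h2
    exact (Real.exp_pos _).ne' h2.symm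
  -- submartingale step via tangent lines
  have hstep : ∀ θ : ℝ, ∀ s s' : ℝ, 0 ≤ s → s ≤ s' → s' ≤ t →
      (fun ω => Real.exp (θ * X s ω)) ≤ᵐ[P] P[fun ω => Real.exp (θ * X s' ω)|ℱ s] := by
    intro θ s s' hs hss' hs't
    have hXint : Integrable (X s') P := hmart.integrable s'
    have hEint : Integrable (fun ω => Real.exp (θ * X s' ω)) P :=
      hint θ s' (hs.trans hss') hs't
    have hq : ∀ q : ℚ, ∀ᵐ ω ∂P,
        (Real.exp (θ*(q:ℝ)) - θ * Real.exp (θ*(q:ℝ)) * (q:ℝ)) + (θ * Real.exp (θ*(q:ℝ))) * X s ω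
          ≤ (P[fun ω => Real.exp (θ * X s' ω)|ℱ s]) ω := by
      intro q
      set c0 : ℝ := Real.exp (θ*(q:ℝ)) - θ * Real.exp (θ*(q:ℝ)) * (q:ℝ) with hc0
      set d : ℝ := θ * Real.exp (θ*(q:ℝ)) with hd
      have haffint : Integrable (((fun _ => c0) : Ω → ℝ) + d • X s') P :=
        (integrable_const c0).add (hXint.smul d)
      have hpt : (((fun _ => c0) : Ω → ℝ) + d • X s') ≤ᵐ[P] (fun ω => Real.exp (θ * X s' ω)) := by
        refine ae_of_all _ (fun ω => ?_)
        simp only [Pi.add_apply, Pi.smul_apply, smul_eq_mul, hc0, hd]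
        have h1 : Real.exp (θ * X s' ω - θ * (q:ℝ)) * Real.exp (θ * (q:ℝ))
            = Real.exp (θ * X s' ω) := by
          rw [← Real.exp_add]; ring_nf
        nlinarith [Real.add_one_le_exp (θ * X s' ω - θ * (q:ℝ)), Real.exp_pos (θ * (q:ℝ))]
      have hmono := condExp_mono (m := ℱ s) haffint hEint hpt
      have hsum : P[((fun _ => c0) : Ω → ℝ) + d • X s'|ℱ s]
          =ᵐ[P] P[((fun _ => c0) : Ω → ℝ)|ℱ s] + P[d • X s'|ℱ s] :=
        condExp_add (integrable_const c0) (hXint.smul d) _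
      have hsm : P[d • X s'|ℱ s] =ᵐ[P] d • P[X s'|ℱ s] := condExp_smul d (X s') _
      have hmX : P[X s'|ℱ s] =ᵐ[P] X s := hmart.2 s s' hss'
      have hconst : P[((fun _ => c0) : Ω → ℝ)|ℱ s] = fun _ => c0 := condExp_const (ℱ.le s) c0
      filter_upwards [hmono, hsum, hsm, hmX] with ω h1 h2 h3 h4
      have hxx : (P[((fun _ => c0) : Ω → ℝ) + d • X s'|ℱ s]) ω = c0 + d * X s ω := by
        rw [h2, Pi.add_apply, hconst, h3, Pi.smul_apply, smul_eq_mul, h4]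
      calc c0 + d * X s ω = (P[((fun _ => c0) : Ω → ℝ) + d • X s'|ℱ s]) ω := hxx.symm
        _ ≤ _ := h1
    have hae := ae_all_iff.2 hq
    filter_upwards [hae] with ω hω
    have hcl : IsClosed {u : ℝ | Real.exp (θ*u) - θ * Real.exp (θ*u) * u
        + θ * Real.exp (θ*u) * X s ω ≤ (P[fun ω => Real.exp (θ * X s' ω)|ℱ s]) ω} := by
      apply isClosed_le _ continuous_const
      fun_prop
    have hsub : Set.range ((↑) : ℚ → ℝ) ⊆ {u : ℝ | Real.exp (θ*u) - θ * Real.exp (θ*u) * u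
        + θ * Real.exp (θ*u) * X s ω ≤ (P[fun ω => Real.exp (θ * X s' ω)|ℱ s]) ω} := by
      rintro _ ⟨q, rfl⟩
      exact hω q
    have hall := hcl.closure_subset_iff.2 hsub (Rat.denseRange_cast (X s ω))
    simp only [Set.mem_setOf_eq] at hall
    linarith [hall]
  -- case split
  by_cases hcase : 0 ≤ b / ((1 + 1 / (p : ℝ)) * a) * (1 + Real.log (t * B * cp / (a * b)))
  · calc (P {ω | b < sSup ((fun s => X s ω) '' Set.Icc 0 t)}).toReal
        ≤ (1 : ℝ≥0∞).toReal := ENNReal.toReal_mono ENNReal.one_ne_top prob_le_one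
      _ = 1 := rfl
      _ ≤ _ := Real.one_le_exp hcase
  · push_neg at hcase
    have hp0 : 0 < p := hp
    have hp1 : (0:ℝ) < (p:ℝ) := by exact_mod_cast hp0
    have hcppos : 0 < cp := by
      rw [hcp]
      exact Real.rpow_pos_of_pos (by exact_mod_cast p.factorial_pos) _
    have hco : 0 < b / ((1 + 1/(p:ℝ)) * a) := by positivity
    have hlog : 1 + Real.log (t * B * cp / (a * b)) < 0 := by
      by_contra h
      push_neg at h
      exact absurd (mul_nonneg hco.le h) (not_le.2 hcase)
    have hr : 0 < t * B * cp / (a * b) := by positivity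
    have hrlt : t * B * cp / (a * b) < Real.exp (-1) := by
      rw [← Real.exp_log hr]
      exact Real.exp_lt_exp.2 (by linarith)
    have hcpev : cp ^ p = (p.factorial : ℝ) := by
      rw [hcp]
      exact Real.rpow_inv_natCast_pow (by positivity) (Nat.pos_iff_ne_zero.mp hp0)
    have hpe : (p:ℝ) + 1 ≤ Real.exp 1 * cp := by
      have h1 : ((p:ℝ)+1)^p ≤ (Real.exp 1 * cp)^p := by
        rw [mul_pow, Real.exp_one_pow, hcpev]
        exact succ_pow_le_exp_mul_factorial' p
      exact le_of_pow_le_pow_left₀ (Nat.pos_iff_ne_zero.mp hp0) (by positivity) h1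
    have hTB : 0 < t * B := mul_pos ht hBpos
    have hpp : ((p:ℝ) + 1) ≠ 0 := by positivity
    set R : ℝ := a * b / (t * B * ((p:ℝ)+1)) with hRdef
    have hR1 : 1 < R := by
      rw [hRdef, lt_div_iff₀ (by positivity)]
      have h3 : t*B*cp < Real.exp (-1) * (a*b) := by
        have := (div_lt_iff₀ (by positivity : (0:ℝ) < a*b)).1 hrlt
        linarith
      have h2 : t*B*((p:ℝ)+1) ≤ Real.exp 1 * (t*B*cp) := by nlinarith [hpe, hTB]
      calc 1 * (t*B*((p:ℝ)+1)) = t*B*((p:ℝ)+1) := by ring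
        _ ≤ Real.exp 1 * (t*B*cp) := h2
        _ < Real.exp 1 * (Real.exp (-1) * (a*b)) :=
            mul_lt_mul_of_pos_left h3 (Real.exp_pos 1)
        _ = a*b := by rw [← mul_assoc, ← Real.exp_add]; norm_num
    have hRpos : 0 < R := lt_trans one_pos hR1
    set θ : ℝ := Real.log R / a with hθdef
    have hθ : 0 < θ := div_pos (Real.log_pos hR1) ha
    have hθa : θ * a = Real.log R := by
      rw [hθdef]; field_simp
    have hexpθa : Real.exp (θ * a) = R := by rw [hθa, Real.exp_log hRpos]
    set Iθ : ℝ := ∫ y in Set.Ioc (0:ℝ) a, (Real.exp (θ * y) - 1 - θ * y) ∂Λ with hIdef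
    -- integral comparison
    have hg2int : IntegrableOn (fun y : ℝ => y ^ 2) (Set.Ioc (0:ℝ) a) Λ := by
      constructor
      · exact (continuous_pow 2).aestronglyMeasurable
      · rw [hasFiniteIntegral_iff_ofReal (ae_of_all _ fun y => sq_nonneg y)]
        exact hBfin
    set C : ℝ := (Real.exp (θ*a) - 1 - θ*a) / a^2 with hCdef
    have hC0 : 0 ≤ C := by
      rw [hCdef]
      apply div_nonneg (by nlinarith [Real.add_one_le_exp (θ*a)]) (by positivity)
    have hpt : ∀ y ∈ Set.Ioc (0:ℝ) a, Real.exp (θ*y) - 1 - θ*y ≤ C * y^2 := by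
      intro y hy
      have h1 : (0:ℝ) ≤ θ*y := mul_nonneg hθ.le hy.1.le
      have h2 : θ*y ≤ θ*a := mul_le_mul_of_nonneg_left hy.2 hθ.le
      have key := exp_tail_mul_le' h1 h2
      have hCy : C * y ^ 2 = ((Real.exp (θ*a) - 1 - θ*a) * y^2) / a^2 := by
        rw [hCdef]; ring
      rw [hCy, le_div_iff₀ (by positivity : (0:ℝ) < a^2)]
      nlinarith [key, mul_pos hθ hθ, sq_nonneg y]
    have hfIntOn : IntegrableOn (fun y => Real.exp (θ*y) - 1 - θ*y) (Set.Ioc (0:ℝ) a) Λ := by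
      refine Integrable.mono (hg2int.const_mul C) ?_ ?_
      · apply Continuous.aestronglyMeasurable
        fun_prop
      · rw [ae_restrict_iff' measurableSet_Ioc]
        refine ae_of_all _ (fun y hy => ?_)
        have h0' : 0 ≤ Real.exp (θ*y) - 1 - θ*y := by nlinarith [Real.add_one_le_exp (θ*y)]
        rw [Real.norm_of_nonneg h0', Real.norm_of_nonneg (mul_nonneg hC0 (sq_nonneg y))]
        exact hpt y hy
    have hIle : Iθ ≤ C * B := by
      rw [hIdef, hBdef]
      calc (∫ y in Set.Ioc (0:ℝ) a, (Real.exp (θ * y) - 1 - θ * y) ∂Λ)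
          ≤ ∫ y in Set.Ioc (0:ℝ) a, C * y^2 ∂Λ :=
          setIntegral_mono_on hfIntOn (hg2int.const_mul C) measurableSet_Ioc hpt
        _ = C * ∫ y in Set.Ioc (0:ℝ) a, y^2 ∂Λ := integral_const_mul C _
    -- rationals enumeration
    obtain ⟨e, he⟩ : ∃ e : ℕ → ℚ, Function.Surjective e :=
      ⟨fun n => (Denumerable.eqv ℚ).symm n, (Denumerable.eqv ℚ).symm.surjective⟩
    set τ : ℕ → ℝ := fun n => if ((e n : ℝ)) ∈ Set.Icc (0:ℝ) t then (e n : ℝ) else t with hτ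
    have hτmem : ∀ n, τ n ∈ Set.Icc (0:ℝ) t := by
      intro n
      simp only [hτ]
      split
      · assumption
      · exact ⟨ht.le, le_rfl⟩
    set A : ℕ → Set Ω := fun n => {ω | b < X (τ n) ω} with hA
    -- Doob for a finite set of times
    have hfin : ∀ F : Finset ℝ, (∀ s ∈ F, s ∈ Set.Icc (0:ℝ) t) →
        P (⋃ s ∈ F, {ω | b < X s ω}) ≤ ENNReal.ofReal (Real.exp (t * Iθ - θ * b)) := by
      intro F hF
      set n := F.card with hn
      set σ : ℕ → ℝ := fun k =>
        if h : k < n then ((F.orderIsoOfFin hn.symm ⟨k, h⟩ : {x // x ∈ F}) : ℝ) else t with hσ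
      have hσmem : ∀ k, σ k ∈ Set.Icc (0:ℝ) t := by
        intro k
        simp only [hσ]
        split
        · next h => exact hF _ (F.orderIsoOfFin hn.symm ⟨k, h⟩).2
        · exact ⟨ht.le, le_rfl⟩
      have hσmono : Monotone σ := by
        intro i j hij
        simp only [hσ]
        by_cases hj : j < n
        · have hi : i < n := lt_of_le_of_lt hij hj
          rw [dif_pos hi, dif_pos hj]
          exact Subtype.coe_le_coe.2 ((F.orderIsoOfFin hn.symm).monotone (Fin.mk_le_mk.2 hij))
        · rw [dif_neg hj]
          split
          · next h => exact (hF _ (F.orderIsoOfFin hn.symm ⟨i, h⟩).2).2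
          · exact le_rfl
      set G : Filtration ℕ mΩ :=
        ⟨fun k => ℱ (σ k), fun i j hij => ℱ.mono (hσmono hij), fun k => ℱ.le _⟩ with hG
      set g : ℕ → Ω → ℝ := fun k ω => Real.exp (θ * X (σ k) ω) with hg
      have hsubm : Submartingale g G P := by
        refine ⟨fun k => ?_, fun i j hij => ?_, fun k => hint θ (σ k) (hσmem k).1 (hσmem k).2⟩
        · exact (Real.continuous_exp.comp
            (continuous_const.mul continuous_id)).comp_stronglyMeasurable (hmart.stronglyAdapted (σ k))
        · exact hstep θ (σ i) (σ j) (hσmem i).1 (hσmono hij) (hσmem j).2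
      set ε : NNReal := (Real.exp (θ * b)).toNNReal with hε
      have hεcoe : (ε : ℝ) = Real.exp (θ * b) := Real.coe_toNNReal _ (Real.exp_pos _).le
      have hgnn : (0 : ℕ → Ω → ℝ) ≤ g := by
        intro k
        intro ω
        exact (Real.exp_pos _).le
      have hmax := maximal_ineq hsubm hgnn (ε := ε) n
      have hσn : σ n = t := by
        simp only [hσ]
        rw [dif_neg (lt_irrefl n)]
      have hgn : ∫ ω, g n ω ∂P = Real.exp (t * Iθ) := by
        simp only [hg, hσn]
        rw [hIdef]
        exact hmgf θ t ht.le le_rfl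
      have hS : (⋃ s ∈ F, {ω | b < X s ω}) ⊆
          {ω | (ε:ℝ) ≤ (Finset.range (n+1)).sup' Finset.nonempty_range_add_one fun k => g k ω} := by
        intro ω hω
        simp only [Set.mem_iUnion] at hω
        obtain ⟨s, hsF, hbs⟩ := hω
        set k : Fin n := (F.orderIsoOfFin hn.symm).symm ⟨s, hsF⟩ with hk
        have h5 : (F.orderIsoOfFin hn.symm) ⟨(k:ℕ), k.isLt⟩ = ⟨s, hsF⟩ := by
          rw [Fin.eta, hk]
          exact (F.orderIsoOfFin hn.symm).apply_symm_apply _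
        have hks : σ (k : ℕ) = s := by
          simp only [hσ]
          rw [dif_pos k.isLt]
          exact congrArg Subtype.val h5
        have hmem : (k:ℕ) ∈ Finset.range (n+1) :=
          Finset.mem_range.2 (lt_of_lt_of_le k.isLt (Nat.le_succ n))
        refine le_trans ?_ (Finset.le_sup' (fun k => g k ω) hmem)
        simp only [hg, hks]
        rw [hεcoe]
        exact Real.exp_le_exp.2 (mul_le_mul_of_nonneg_left hbs.le hθ.le)
      have h1 : (ε : ℝ≥0∞) * P (⋃ s ∈ F, {ω | b < X s ω})
          ≤ ENNReal.ofReal (Real.exp (t * Iθ)) := by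
        calc (ε : ℝ≥0∞) * P (⋃ s ∈ F, {ω | b < X s ω})
            ≤ (ε : ℝ≥0∞) * P {ω | (ε:ℝ) ≤
                (Finset.range (n+1)).sup' Finset.nonempty_range_add_one fun k => g k ω} :=
              mul_le_mul_right (measure_mono hS) _
          _ ≤ ENNReal.ofReal (∫ ω in {ω | (ε:ℝ) ≤
                (Finset.range (n+1)).sup' Finset.nonempty_range_add_one fun k => g k ω},
                g n ω ∂P) := hmax
          _ ≤ ENNReal.ofReal (∫ ω, g n ω ∂P) := by
              apply ENNReal.ofReal_le_ofReal
              exact setIntegral_le_integral (hsubm.2.2 n)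
                (ae_of_all _ fun ω => (Real.exp_pos _).le)
          _ = ENNReal.ofReal (Real.exp (t * Iθ)) := by rw [hgn]
      have hεne : (ε : ℝ≥0∞) ≠ 0 := by
        simp only [hε, ne_eq, ENNReal.coe_eq_zero, Real.toNNReal_eq_zero, not_le]
        exact Real.exp_pos _
      have h2 : P (⋃ s ∈ F, {ω | b < X s ω})
          ≤ ENNReal.ofReal (Real.exp (t * Iθ)) / (ε : ℝ≥0∞) := by
        rw [ENNReal.le_div_iff_mul_le (Or.inl hεne) (Or.inl ENNReal.coe_ne_top)]
        rw [mul_comm]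
        exact h1
      refine h2.trans_eq ?_
      have hεof : (ε : ℝ≥0∞) = ENNReal.ofReal (Real.exp (θ * b)) := by
        rw [hε, ENNReal.ofReal]
      rw [hεof, ← ENNReal.ofReal_div_of_pos (Real.exp_pos _), ← Real.exp_sub]
    -- a.e. inclusion into the countable union
    have hae : ∀ᵐ ω ∂P, b < sSup ((fun s => X s ω) '' Set.Icc 0 t) → ω ∈ ⋃ n, A n := by
      filter_upwards [hrc] with ω hω hmem
      have hne : ((fun s => X s ω) '' Set.Icc 0 t).Nonempty :=
        (Set.nonempty_Icc.2 ht.le).image _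
      obtain ⟨x, hx, hbx⟩ := exists_lt_of_lt_csSup hne hmem
      obtain ⟨s, hsI, rfl⟩ := hx
      rcases eq_or_lt_of_le hsI.2 with heq | hst
      · obtain ⟨q, hq⟩ := exists_rat_gt t
        obtain ⟨n, hn⟩ := he q
        have hτn : τ n = t := by
          have hnot : ¬ ((e n : ℝ) ∈ Set.Icc (0:ℝ) t) := by
            rw [hn]
            exact fun hm => absurd hm.2 (not_le.2 hq)
          simp only [hτ]
          rw [if_neg hnot]
        refine Set.mem_iUnion.2 ⟨n, ?_⟩
        simp only [hA, Set.mem_setOf_eq, hτn, ← heq]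
        exact hbx
      · have hV : {u : ℝ | b < X u ω} ∈ 𝓝[≥] s := hω s (Ioi_mem_nhds hbx)
        rw [mem_nhdsGE_iff_exists_Ico_subset] at hV
        obtain ⟨u, hu, hIco⟩ := hV
        obtain ⟨q, hq1, hq2⟩ := exists_rat_btwn (lt_min hu hst)
        obtain ⟨n, hn⟩ := he q
        have hqI : (q:ℝ) ∈ Set.Icc (0:ℝ) t :=
          ⟨hsI.1.trans hq1.le, ((lt_min_iff.1 hq2).2).le⟩
        have hτn : τ n = (q:ℝ) := by
          simp only [hτ]
          rw [hn, if_pos hqI]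
        refine Set.mem_iUnion.2 ⟨n, ?_⟩
        have hqV : (q:ℝ) ∈ {u : ℝ | b < X u ω} := hIco ⟨hq1.le, (lt_min_iff.1 hq2).1⟩
        simp only [hA, Set.mem_setOf_eq, hτn]
        exact hqV
    have hPE : P {ω | b < sSup ((fun s => X s ω) '' Set.Icc 0 t)} ≤ P (⋃ n, A n) := by
      apply measure_mono_ae
      filter_upwards [hae] with ω h
      exact h
    have hUnion : P (⋃ n, A n) ≤ ENNReal.ofReal (Real.exp (t * Iθ - θ * b)) := by
      rw [measure_iUnion_eq_iSup_accumulate]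
      refine iSup_le (fun N => ?_)
      have hsub2 : Set.accumulate A N ⊆
          ⋃ s ∈ (Finset.range (N+1)).image τ, {ω | b < X s ω} := by
        intro ω hω
        rw [Set.mem_accumulate] at hω
        obtain ⟨n, hnN, hmem⟩ := hω
        simp only [Set.mem_iUnion]
        refine ⟨τ n, Finset.mem_image.2 ⟨n, Finset.mem_range.2 (Nat.lt_succ_of_le hnN), rfl⟩, ?_⟩
        simpa only [hA, Set.mem_setOf_eq] using hmem
      refine le_trans (measure_mono hsub2) (hfin _ ?_)
      intro s hs
      obtain ⟨n, -, rfl⟩ := Finset.mem_image.1 hs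
      exact hτmem n
    -- final arithmetic
    have hCle : C ≤ θ * Real.exp (θ*a) / a := by
      rw [hCdef, div_le_div_iff₀ (by positivity) ha]
      nlinarith [exp_sub_one_sub_le' (mul_nonneg hθ.le ha.le), ha, Real.exp_pos (θ*a)]
    have hIb : t * Iθ ≤ θ * b / ((p:ℝ)+1) := by
      have h1 : t * Iθ ≤ t * (C * B) := mul_le_mul_of_nonneg_left hIle ht.le
      have h2 : C * B ≤ (θ * Real.exp (θ*a) / a) * B :=
        mul_le_mul_of_nonneg_right hCle hBpos.le
      have h3 : t * ((θ * Real.exp (θ*a) / a) * B) = θ * b / ((p:ℝ)+1) := by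
        rw [hexpθa, hRdef]
        field_simp
      have h4 : t * (C * B) ≤ t * ((θ * Real.exp (θ*a) / a) * B) :=
        mul_le_mul_of_nonneg_left h2 ht.le
      linarith
    have hfinal : t * Iθ - θ * b ≤
        b / ((1 + 1 / (p:ℝ)) * a) * (1 + Real.log (t * B * cp / (a * b))) := by
      have h4 : t * Iθ - θ * b ≤ -(θ * b * p / ((p:ℝ)+1)) := by
        have h5 : θ*b/((p:ℝ)+1) - θ*b = -(θ*b*(p:ℝ)/((p:ℝ)+1)) := by
          field_simp
          ring
        linarith
      refine h4.trans ?_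
      have hcoeff : b / ((1 + 1/(p:ℝ)) * a) = b * p / (((p:ℝ)+1) * a) := by
        rw [div_eq_div_iff (by positivity) (by positivity)]
        field_simp
      have h5 : -(θ * b * (p:ℝ) / ((p:ℝ)+1)) = b * p / (((p:ℝ)+1) * a) * (- Real.log R) := by
        rw [hθdef]
        field_simp
      have h6 : - Real.log R ≤ 1 + Real.log (t * B * cp / (a * b)) := by
        have hRinv : - Real.log R = Real.log (t*B*((p:ℝ)+1)/(a*b)) := by
          rw [hRdef, ← Real.log_inv]
          rw [inv_div]
        rw [hRinv]
        have h7 : 1 + Real.log (t*B*cp/(a*b)) = Real.log (Real.exp 1 * (t*B*cp/(a*b))) := by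
          rw [Real.log_mul (Real.exp_ne_zero 1) (ne_of_gt hr), Real.log_exp]
        rw [h7]
        apply Real.log_le_log (by positivity)
        rw [mul_div_assoc']
        have hnum : t*B*((p:ℝ)+1) ≤ Real.exp 1 * (t*B*cp) := by nlinarith [hpe, hTB]
        exact div_le_div_of_nonneg_right hnum (by positivity)
      rw [h5, hcoeff]
      exact mul_le_mul_of_nonneg_left h6 (by positivity)
    have hle : P {ω | b < sSup ((fun s => X s ω) '' Set.Icc 0 t)}
        ≤ ENNReal.ofReal (Real.exp (t * Iθ - θ * b)) := hPE.trans hUnion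
    calc (P {ω | b < sSup ((fun s => X s ω) '' Set.Icc 0 t)}).toReal
        ≤ Real.exp (t * Iθ - θ * b) :=
          ENNReal.toReal_le_of_le_ofReal (Real.exp_pos _).le hle
      _ ≤ _ := Real.exp_le_exp.2 hfinal
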